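/- arXiv:1012.2395 — 2 statements merged into one kernel-verified Lean document; each statement's English description precedes it below -/
import Mathlib

section
/- For the fully discrete scheme with velocity field satisfying Assumption A, define g_n^k(x) = x + v[λ_n^k](x)Δt_k. Then for every Lipschitz continuous φ : ℝ^d → ℝ and every n = 0,…,N_k−1: |∫φ dλ_{n+1}^k − ∫ φ ∘ g_n^k dλ_n^k| ≤ (2 + L Δt_k) Lip(φ) √d h_k, where L is the Lipschitz constant of v. -/
open MeasureTheory Metric Filter

noncomputable section

abbrev Euc (d : ℕ) := EuclideanSpace ℝ (Fin d)

/-- `P1 μ`: μ is a Borel probability measure with finite first moment. -/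
def P1 {d : ℕ} (μ : Measure (Euc d)) : Prop :=
  IsProbabilityMeasure μ ∧ Integrable (fun x => ‖x‖) μ

/-- `P2 μ`: μ is a Borel probability measure with finite second moment. -/
def P2 {d : ℕ} (μ : Measure (Euc d)) : Prop :=
  IsProbabilityMeasure μ ∧ Integrable (fun x => ‖x‖ ^ 2) μ

/-- The Wasserstein distance `W₁(μ,ν) = sup {∫ φ dν − ∫ φ dμ : φ 1-Lipschitz}`. -/
def W1 {d : ℕ} (μ ν : Measure (Euc d)) : ℝ :=
  ⨆ φ : {φ : Euc d → ℝ // LipschitzWith 1 φ}, (∫ x, φ.1 x ∂ν - ∫ x, φ.1 x ∂μ)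

/-- Assumption A on the velocity field. -/
def AssumptionA {d : ℕ} (v : Measure (Euc d) → Euc d → Euc d) (V L : ℝ) : Prop :=
  0 < V ∧ 0 < L ∧
  (∀ μ, P1 μ → ∀ x, ‖v μ x‖ ≤ V) ∧
  (∀ μ ν, P1 μ → P1 ν → ∀ x y, ‖v ν y - v μ x‖ ≤ L * (‖y - x‖ + W1 μ ν)) ∧
  (∀ μ ν, P1 μ → P1 ν → ∀ α : ℝ, 0 ≤ α → α ≤ 1 → ∀ x,
    v (ENNReal.ofReal α • μ + ENNReal.ofReal (1 - α) • ν) x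
      = α • v μ x + (1 - α) • v ν x)

/-- Continuity of a curve of measures with respect to the `W₁` metric, on `[0,T]`. -/
def W1ContinuousOn {d : ℕ} (μ : ℝ → Measure (Euc d)) (T : ℝ) : Prop :=
  ∀ t ∈ Set.Icc (0:ℝ) T, ∀ ε > 0, ∃ δ > 0,
    ∀ s ∈ Set.Icc (0:ℝ) T, |s - t| < δ → W1 (μ s) (μ t) < ε

/-- Weak solution of the Cauchy problem ∂ₜμ + ∇·(μ v[μ]) = 0, μ₀ = μ̄, on [0,T]. -/
def IsWeakSolution {d : ℕ} (v : Measure (Euc d) → Euc d → Euc d) (T : ℝ)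
    (μbar : Measure (Euc d)) (μ : ℝ → Measure (Euc d)) : Prop :=
  (∀ t ∈ Set.Icc (0:ℝ) T, P1 (μ t)) ∧ W1ContinuousOn μ T ∧
  ∀ φ : Euc d → ℝ, ContDiff ℝ (⊤ : ℕ∞) φ → HasCompactSupport φ →
    ∀ t ∈ Set.Icc (0:ℝ) T,
      ∫ x, φ x ∂(μ t) = (∫ x, φ x ∂μbar) +
        ∫ τ in (0:ℝ)..t, ∫ x, (inner ℝ (v (μ τ) x) (gradient φ x) : ℝ) ∂(μ τ)

/-- One step of the semi-discrete scheme: push forward by the one-step flow map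
`γ(x) = x + v[μ](x) Δt`. -/
def flowStep {d : ℕ} (v : Measure (Euc d) → Euc d → Euc d) (Δt : ℝ)
    (μ : Measure (Euc d)) : Measure (Euc d) :=
  μ.map (fun x => x + Δt • v μ x)

/-- The semi-discrete scheme `μ₀ = μ̄`, `μ_{n+1} = γ_n # μ_n`. -/
def sdScheme {d : ℕ} (v : Measure (Euc d) → Euc d → Euc d) (μbar : Measure (Euc d))
    (Δt : ℝ) : ℕ → Measure (Euc d)
  | 0 => μbar
  | n + 1 => flowStep v Δt (sdScheme v μbar Δt n)

/-- Linear-in-time interpolation of a sequence of measures with time step `Δt`. -/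
def interp {d : ℕ} (μseq : ℕ → Measure (Euc d)) (Δt : ℝ) (t : ℝ) : Measure (Euc d) :=
  ENNReal.ofReal (1 - (t - ⌊t / Δt⌋₊ * Δt) / Δt) • μseq ⌊t / Δt⌋₊ +
    ENNReal.ofReal ((t - ⌊t / Δt⌋₊ * Δt) / Δt) • μseq (⌊t / Δt⌋₊ + 1)

/-- Index of the grid cell containing `x`: `x_l ∈ [(i_l − 1/2)h, (i_l + 1/2)h)`. -/
def cellIdx {d : ℕ} (h : ℝ) (x : Euc d) : Fin d → ℤ := fun l => ⌊x l / h + 1 / 2⌋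

/-- Center `x_i = i h` of the grid cell with index `i`. -/
def cellCenter {d : ℕ} (h : ℝ) (i : Fin d → ℤ) : Euc d :=
  (EuclideanSpace.equiv (Fin d) ℝ).symm (fun l => (i l : ℝ) * h)

/-- The grid cell `E_i = ∏_l [(i_l − 1/2)h, (i_l + 1/2)h)`. -/
def cell {d : ℕ} (h : ℝ) (i : Fin d → ℤ) : Set (Euc d) := {x | cellIdx h x = i}

/-- Piecewise-constant (cellwise) discretization of a measure: the absolutely continuous
measure with density `μ(E_i)/h^d` on the cell `E_i`. -/
def discretize {d : ℕ} (h : ℝ) (μ : Measure (Euc d)) : Measure (Euc d) :=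
  volume.withDensity (fun x => μ (cell h (cellIdx h x)) / ENNReal.ofReal (h ^ d))

/-- The piecewise-constant approximate velocity `v̂[μ](x) = v[μ](x_i)` for `x ∈ E_i`. -/
def vhat {d : ℕ} (v : Measure (Euc d) → Euc d → Euc d) (h : ℝ)
    (μ : Measure (Euc d)) : Euc d → Euc d :=
  fun x => v μ (cellCenter h (cellIdx h x))

/-- The fully discrete scheme: `λ₀ = discretization of μ̄`,
`λ_{n+1} = discretization of γ̂_n # λ_n` with `γ̂_n(x) = x + v̂[λ_n](x) Δt`. -/
def fdScheme {d : ℕ} (v : Measure (Euc d) → Euc d → Euc d) (μbar : Measure (Euc d))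
    (h Δt : ℝ) : ℕ → Measure (Euc d)
  | 0 => discretize h μbar
  | n + 1 =>
      discretize h ((fdScheme v μbar h Δt n).map
        (fun x => x + Δt • vhat v h (fdScheme v μbar h Δt n) x))

/-- Uniform-in-time convergence on `[0,T]` with respect to `W₁`. -/
def UnifW1Tendsto {d : ℕ} (Λ : ℕ → ℝ → Measure (Euc d)) (μ : ℝ → Measure (Euc d))
    (T : ℝ) : Prop :=
  ∀ ε > 0, ∃ K : ℕ, ∀ k ≥ K, ∀ t ∈ Set.Icc (0:ℝ) T, W1 (Λ k t) (μ t) < ε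


section Aux
variable {d : ℕ} {h : ℝ}

lemma cellCenter_apply (i : Fin d → ℤ) (l : Fin d) : cellCenter h i l = (i l : ℝ) * h := rfl

lemma abs_coord_sub_center_le (hh : 0 < h) (x : Euc d) (l : Fin d) :
    |x l - cellCenter h (cellIdx h x) l| ≤ h / 2 := by
  rw [cellCenter_apply]
  show |x l - (⌊x l / h + 1 / 2⌋ : ℝ) * h| ≤ h / 2
  set z : ℤ := ⌊x l / h + 1 / 2⌋ with hz
  have h1 : (z : ℝ) ≤ x l / h + 1 / 2 := Int.floor_le _
  have h2 : x l / h + 1 / 2 < z + 1 := Int.lt_floor_add_one _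
  have hxl : x l = (x l / h) * h := by field_simp
  rw [abs_le]
  constructor <;> nlinarith [hh.le]

lemma norm_sub_center_le (hh : 0 < h) (x : Euc d) :
    ‖x - cellCenter h (cellIdx h x)‖ ≤ Real.sqrt d * h / 2 := by
  have : ‖x - cellCenter h (cellIdx h x)‖ ≤ Real.sqrt (d * (h/2)^2) := by
    rw [EuclideanSpace.norm_eq]
    apply Real.sqrt_le_sqrt
    calc ∑ l : Fin d, ‖(x - cellCenter h (cellIdx h x)) l‖ ^ 2
        ≤ ∑ l : Fin d, (h/2)^2 := by
          apply Finset.sum_le_sum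
          intro l _
          have := abs_coord_sub_center_le hh x l
          have hn : ‖(x - cellCenter h (cellIdx h x)) l‖ = |x l - cellCenter h (cellIdx h x) l| := rfl
          rw [hn]
          nlinarith [abs_nonneg (x l - cellCenter h (cellIdx h x) l)]
      _ = d * (h/2)^2 := by simp [Finset.sum_const, mul_comm]
  refine this.trans_eq ?_
  rw [Real.sqrt_mul (Nat.cast_nonneg d), Real.sqrt_sq (by positivity)]
  ring

lemma measurable_cellIdx : Measurable (cellIdx (d := d) h) := by
  apply measurable_pi_lambda
  intro l
  exact Int.measurable_floor.comp (((continuous_apply l).measurable.comp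
    ((MeasurableEquiv.toLp 2 (Fin d → ℝ)).symm).measurable).div_const h |>.add_const _)

lemma measurableSet_cell (i : Fin d → ℤ) : MeasurableSet (cell h i) :=
  measurable_cellIdx (MeasurableSet.singleton i)

lemma cell_eq_pi (hh : 0 < h) (i : Fin d → ℤ) :
    cell h i = (⇑((MeasurableEquiv.toLp 2 (Fin d → ℝ)).symm)) ⁻¹'
      (Set.univ.pi fun l => Set.Ico (((i l : ℝ) - 1/2) * h) (((i l : ℝ) + 1/2) * h)) := by
  ext x
  simp only [cell, cellIdx, Set.mem_setOf_eq, Set.mem_preimage, Set.mem_pi, Set.mem_univ,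
    Set.mem_Ico, true_implies, funext_iff]
  have hequiv : ∀ l, ((MeasurableEquiv.toLp 2 (Fin d → ℝ)).symm) x l = x l := fun l => rfl
  constructor
  · intro hx l
    have := hx l
    have h1 : (i l : ℝ) ≤ x l / h + 1 / 2 := this ▸ Int.floor_le _
    have h2 : x l / h + 1 / 2 < (i l : ℝ) + 1 := by
      have := this ▸ Int.lt_floor_add_one (x l / h + 1/2)
      push_cast at this ⊢; linarith
    have hxl : x l = (x l / h) * h := by field_simp
    rw [hequiv]
    constructor <;> nlinarith
  · intro hx l
    obtain ⟨h1, h2⟩ := hx l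
    rw [hequiv] at h1 h2
    rw [Int.floor_eq_iff]
    constructor
    · rw [div_add' _ _ _ hh.ne', le_div_iff₀ hh]; nlinarith
    · rw [div_add' _ _ _ hh.ne', div_lt_iff₀ hh]; push_cast; nlinarith

lemma volume_cell (hh : 0 < h) (i : Fin d → ℤ) :
    volume (cell h i) = ENNReal.ofReal (h ^ d) := by
  rw [cell_eq_pi hh i,
    (EuclideanSpace.volume_preserving_symm_measurableEquiv_toLp (Fin d)).measure_preimage
      (MeasurableSet.univ_pi fun l => measurableSet_Ico).nullMeasurableSet,
    volume_pi_pi]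
  simp only [Real.volume_Ico]
  have : ∀ l : Fin d, ENNReal.ofReal (((i l:ℝ) + 1/2) * h - ((i l:ℝ) - 1/2) * h)
      = ENNReal.ofReal h := by intro l; ring_nf
  rw [Finset.prod_congr rfl (fun l _ => this l), Finset.prod_const, Finset.card_univ,
    Fintype.card_fin, ← ENNReal.ofReal_pow hh.le]

lemma iUnion_cell : (⋃ i : Fin d → ℤ, cell h i) = Set.univ := by
  ext x; simp only [Set.mem_iUnion, Set.mem_univ, iff_true]
  exact ⟨cellIdx h x, rfl⟩

lemma pairwise_disjoint_cell : Pairwise (Function.onFun Disjoint (cell (d := d) h)) := by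
  intro i j hij
  simp only [Function.onFun, Set.disjoint_left]
  rintro x (hx : cellIdx h x = i) (hx' : cellIdx h x = j)
  exact hij (hx ▸ hx')



lemma discretize_apply_cell (hh : 0 < h) (μ : Measure (Euc d)) (i : Fin d → ℤ) :
    discretize h μ (cell h i) = μ (cell h i) := by
  rw [discretize, withDensity_apply _ (measurableSet_cell i)]
  have hcong : ∀ x ∈ cell h i,
      μ (cell h (cellIdx h x)) / ENNReal.ofReal (h ^ d)
        = μ (cell h i) / ENNReal.ofReal (h ^ d) := by
    intro x hx; rw [show cellIdx h x = i from hx]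
  rw [setLIntegral_congr_fun (measurableSet_cell i) hcong,
    setLIntegral_const, volume_cell hh]
  exact ENNReal.div_mul_cancel (by positivity) ENNReal.ofReal_ne_top

lemma map_cellIdx_discretize (hh : 0 < h) (μ : Measure (Euc d)) :
    (discretize h μ).map (cellIdx h) = μ.map (cellIdx h) := by
  rw [Measure.ext_iff_singleton]
  intro i
  rw [Measure.map_apply measurable_cellIdx (MeasurableSet.singleton i),
    Measure.map_apply measurable_cellIdx (MeasurableSet.singleton i)]
  exact discretize_apply_cell hh μ i

lemma discretize_univ (hh : 0 < h) (μ : Measure (Euc d)) :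
    discretize h μ Set.univ = μ Set.univ := by
  have := congrArg (fun m : Measure (Fin d → ℤ) => m Set.univ) (map_cellIdx_discretize hh μ)
  simpa [Measure.map_apply measurable_cellIdx MeasurableSet.univ] using this

lemma isProbabilityMeasure_discretize (hh : 0 < h) {μ : Measure (Euc d)}
    (hμ : IsProbabilityMeasure μ) : IsProbabilityMeasure (discretize h μ) :=
  ⟨by rw [discretize_univ hh]; exact measure_univ⟩

lemma aestronglyMeasurable_comp_cellIdx (ρ : (Fin d → ℤ) → ℝ) (ν : Measure (Fin d → ℤ)) :
    AEStronglyMeasurable ρ ν :=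
  ((measurable_of_countable ρ).stronglyMeasurable).aestronglyMeasurable

lemma integral_comp_cellIdx (hh : 0 < h) (μ : Measure (Euc d)) (ρ : (Fin d → ℤ) → ℝ) :
    ∫ x, ρ (cellIdx h x) ∂(discretize h μ) = ∫ x, ρ (cellIdx h x) ∂μ := by
  rw [← integral_map measurable_cellIdx.aemeasurable (aestronglyMeasurable_comp_cellIdx ρ _),
    ← integral_map measurable_cellIdx.aemeasurable (aestronglyMeasurable_comp_cellIdx ρ _),
    map_cellIdx_discretize hh]

lemma integrable_comp_cellIdx_iff (hh : 0 < h) (μ : Measure (Euc d)) (ρ : (Fin d → ℤ) → ℝ) :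
    Integrable (fun x => ρ (cellIdx h x)) (discretize h μ)
      ↔ Integrable (fun x => ρ (cellIdx h x)) μ := by
  rw [show (fun x : Euc d => ρ (cellIdx h x)) = ρ ∘ cellIdx h from rfl,
    ← integrable_map_measure (aestronglyMeasurable_comp_cellIdx ρ _)
      measurable_cellIdx.aemeasurable,
    ← integrable_map_measure (aestronglyMeasurable_comp_cellIdx ρ _)
      measurable_cellIdx.aemeasurable,
    map_cellIdx_discretize hh]

lemma P1_discretize (hh : 0 < h) {μ : Measure (Euc d)} (hμ : P1 μ) : P1 (discretize h μ) := by
  obtain ⟨hprob, hint⟩ := hμ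
  refine ⟨isProbabilityMeasure_discretize hh hprob, ?_⟩
  set r := Real.sqrt d * h / 2 with hr
  have hψm : Measurable fun x : Euc d => ‖cellCenter h (cellIdx h x)‖ :=
    (measurable_of_countable (fun i => ‖cellCenter h i‖)).comp measurable_cellIdx
  have hψint : Integrable (fun x => ‖cellCenter h (cellIdx h x)‖) μ := by
    refine Integrable.mono' (hint.add (integrable_const r)) hψm.aestronglyMeasurable
      (ae_of_all _ fun x => ?_)
    have h1 := norm_sub_center_le hh x
    have h2 : ‖cellCenter h (cellIdx h x)‖ - ‖x‖ ≤ ‖cellCenter h (cellIdx h x) - x‖ :=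
      norm_sub_norm_le _ _
    rw [norm_sub_rev] at h2
    have : ‖cellCenter h (cellIdx h x)‖ ≤ ‖x‖ + r := by linarith
    simpa [abs_of_nonneg (norm_nonneg _)] using this
  have hψint' : Integrable (fun x => ‖cellCenter h (cellIdx h x)‖) (discretize h μ) :=
    (integrable_comp_cellIdx_iff hh μ (fun i => ‖cellCenter h i‖)).2 hψint
  haveI := isProbabilityMeasure_discretize hh hprob
  refine Integrable.mono' (hψint'.add (integrable_const r))
    (measurable_norm.aestronglyMeasurable) (ae_of_all _ fun x => ?_)
  have h1 := norm_sub_center_le hh x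
  have h2 : ‖x‖ - ‖cellCenter h (cellIdx h x)‖ ≤ ‖x - cellCenter h (cellIdx h x)‖ :=
    norm_sub_norm_le _ _
  simpa [abs_of_nonneg (norm_nonneg _)] using by linarith

lemma lipschitz_integrable {μ : Measure (Euc d)} (hμ : P1 μ) {φ : Euc d → ℝ} {K : NNReal}
    (hφ : LipschitzWith K φ) : Integrable φ μ := by
  obtain ⟨hprob, hint⟩ := hμ
  refine Integrable.mono' ((integrable_const |φ 0|).add (hint.const_mul (K : ℝ)))
    hφ.continuous.measurable.aestronglyMeasurable (ae_of_all _ fun x => ?_)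
  have := hφ.dist_le_mul x 0
  rw [Real.dist_eq, dist_eq_norm, sub_zero] at this
  calc ‖φ x‖ = |φ x - φ 0 + φ 0| := by rw [Real.norm_eq_abs]; ring_nf
    _ ≤ |φ x - φ 0| + |φ 0| := abs_add_le _ _
    _ ≤ |φ 0| + (K : ℝ) * ‖x‖ := by linarith

lemma abs_integral_discretize_sub_le (hh : 0 < h) {μ : Measure (Euc d)} (hμ : P1 μ)
    {φ : Euc d → ℝ} {K : NNReal} (hφ : LipschitzWith K φ) :
    |(∫ x, φ x ∂(discretize h μ)) - ∫ x, φ x ∂μ| ≤ (K : ℝ) * Real.sqrt d * h := by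
  haveI hprob := hμ.1
  have hdμ : P1 (discretize h μ) := P1_discretize hh hμ
  haveI := hdμ.1
  set r := Real.sqrt d * h / 2 with hr
  have hr0 : 0 ≤ r := by positivity
  set ψ : Euc d → ℝ := fun x => φ (cellCenter h (cellIdx h x)) with hψ
  have hψm : Measurable ψ :=
    (measurable_of_countable (fun i => φ (cellCenter h i))).comp measurable_cellIdx
  have hbound : ∀ x, |φ x - ψ x| ≤ (K : ℝ) * r := by
    intro x
    have := hφ.dist_le_mul x (cellCenter h (cellIdx h x))
    rw [Real.dist_eq, dist_eq_norm] at this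
    exact this.trans (mul_le_mul_of_nonneg_left (norm_sub_center_le hh x) K.2)
  have hφμ : Integrable φ μ := lipschitz_integrable ⟨hμ.1, hμ.2⟩ hφ
  have hφd : Integrable φ (discretize h μ) := lipschitz_integrable hdμ hφ
  have hψμ : Integrable ψ μ := by
    refine Integrable.mono' (hφμ.abs.add (integrable_const ((K:ℝ) * r)))
      hψm.aestronglyMeasurable (ae_of_all _ fun x => ?_)
    have := hbound x
    rw [Real.norm_eq_abs]
    calc |ψ x| = |φ x - (φ x - ψ x)| := by ring_nf
      _ ≤ |φ x| + |φ x - ψ x| := abs_sub _ _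
      _ ≤ |φ x| + (K : ℝ) * r := by linarith
  have hψd : Integrable ψ (discretize h μ) :=
    (integrable_comp_cellIdx_iff hh μ (fun i => φ (cellCenter h i))).2 hψμ
  have heq : ∫ x, ψ x ∂(discretize h μ) = ∫ x, ψ x ∂μ :=
    integral_comp_cellIdx hh μ (fun i => φ (cellCenter h i))
  have habs : ∀ (ν : Measure (Euc d)) (_ : IsProbabilityMeasure ν), Integrable φ ν →
      Integrable ψ ν → |(∫ x, φ x ∂ν) - ∫ x, ψ x ∂ν| ≤ (K : ℝ) * r := by
    intro ν hνp hφν hψν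
    rw [← integral_sub hφν hψν]
    calc |∫ x, φ x - ψ x ∂ν| ≤ ∫ x, |φ x - ψ x| ∂ν := by
          simpa [Real.norm_eq_abs] using norm_integral_le_integral_norm (fun x => φ x - ψ x) (μ := ν)
      _ ≤ ∫ _x, (K : ℝ) * r ∂ν := integral_mono (hφν.sub hψν).abs (integrable_const _)
          (fun x => hbound x)
      _ = (K : ℝ) * r := by simp
  calc |(∫ x, φ x ∂(discretize h μ)) - ∫ x, φ x ∂μ|
      = |((∫ x, φ x ∂(discretize h μ)) - ∫ x, ψ x ∂(discretize h μ))
          + ((∫ x, ψ x ∂μ) - ∫ x, φ x ∂μ)| := by rw [heq]; ring_nf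
    _ ≤ |(∫ x, φ x ∂(discretize h μ)) - ∫ x, ψ x ∂(discretize h μ)|
          + |(∫ x, ψ x ∂μ) - ∫ x, φ x ∂μ| := abs_add_le _ _
    _ ≤ (K : ℝ) * r + (K : ℝ) * r := by
        refine add_le_add (habs _ (by infer_instance) hφd hψd) ?_
        rw [abs_sub_comm]
        exact habs _ (by infer_instance) hφμ hψμ
    _ = (K : ℝ) * Real.sqrt d * h := by rw [hr]; ring





lemma W1_self (μ : Measure (Euc d)) : W1 μ μ = 0 := by
  have : Nonempty {φ : Euc d → ℝ // LipschitzWith 1 φ} :=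
    ⟨⟨fun _ => (0:ℝ), (LipschitzWith.const (0:ℝ)).weaken zero_le_one⟩⟩
  simp [W1]

lemma measurable_vhat (v : Measure (Euc d) → Euc d → Euc d) (μ : Measure (Euc d)) :
    Measurable (vhat v h μ) :=
  (measurable_of_countable (fun i => v μ (cellCenter h i))).comp measurable_cellIdx

lemma P1_map {μ : Measure (Euc d)} (hμ : P1 μ) {w : Euc d → Euc d} (hw : Measurable w)
    {C : ℝ} (hbC : ∀ x, ‖w x‖ ≤ C) : P1 (μ.map (fun x => x + w x)) := by
  obtain ⟨hprob, hint⟩ := hμ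
  have hm : Measurable (fun x : Euc d => x + w x) := measurable_id.add hw
  refine ⟨Measure.isProbabilityMeasure_map hm.aemeasurable, ?_⟩
  rw [integrable_map_measure measurable_norm.aestronglyMeasurable hm.aemeasurable]
  refine Integrable.mono' (hint.add (integrable_const C))
    (measurable_norm.comp hm).aestronglyMeasurable (ae_of_all _ fun x => ?_)
  simp only [Function.comp_apply, Real.norm_eq_abs, abs_of_nonneg (norm_nonneg _), Pi.add_apply]
  exact (norm_add_le x (w x)).trans (by linarith [hbC x])

lemma integrable_comp_shift {μ : Measure (Euc d)} (hμ : P1 μ) {φ : Euc d → ℝ} {K : NNReal}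
    (hφ : LipschitzWith K φ) {w : Euc d → Euc d} (hw : Measurable w)
    {C : ℝ} (hbC : ∀ x, ‖w x‖ ≤ C) : Integrable (fun x => φ (x + w x)) μ := by
  have hmap := P1_map hμ hw hbC
  have hm : Measurable (fun x : Euc d => x + w x) := measurable_id.add hw
  have := (integrable_map_measure hφ.continuous.measurable.aestronglyMeasurable
    hm.aemeasurable).1 (lipschitz_integrable hmap hφ)
  exact this

lemma P1_fdScheme {v : Measure (Euc d) → Euc d → Euc d} {V : ℝ}
    (hbdd : ∀ μ, P1 μ → ∀ x, ‖v μ x‖ ≤ V)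
    {μbar : Measure (Euc d)} (hμbar : P1 μbar) (hh : 0 < h) {Δt : ℝ} (hΔt : 0 < Δt) :
    ∀ n, P1 (fdScheme v μbar h Δt n) := by
  intro n
  induction n with
  | zero => exact P1_discretize hh hμbar
  | succ n ih =>
    refine P1_discretize hh (P1_map (C := Δt * V) ih ((measurable_vhat v _).const_smul (Δt)) ?_)
    intro x
    rw [norm_smul, Real.norm_eq_abs, abs_of_pos hΔt]
    exact mul_le_mul_of_nonneg_left (hbdd _ ih _) hΔt.le

end Aux


/-- Lemma 9 of the paper.
For the fully discrete scheme with velocity field satisfying Assumption A, with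
`g_n^k(x) = x + v[λ_n^k](x) Δt_k`, for every Lipschitz continuous `φ : ℝ^d → ℝ` with
Lipschitz constant `K` and every `n = 0,…,N_k−1`:
`|∫φ dλ_{n+1}^k − ∫ φ ∘ g_n^k dλ_n^k| ≤ (2 + L Δt_k) K √d h_k`,
where `L` is the Lipschitz constant of `v`. -/
theorem fdScheme_approximate_pushforward_exact_flow
    (d : ℕ) (hd : 1 ≤ d)
    (v : Measure (Euc d) → Euc d → Euc d) (V L : ℝ)
    (hA : AssumptionA v V L)
    (T : ℝ) (hT : 0 < T)
    (μbar : Measure (Euc d)) (hμbar : P1 μbar)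
    (Δt h : ℕ → ℝ) (N : ℕ → ℕ)
    (hΔtpos : ∀ k, 0 < Δt k) (hhpos : ∀ k, 0 < h k)
    (hNT : ∀ k, (N k : ℝ) * Δt k = T)
    (φ : Euc d → ℝ) (K : NNReal) (hφ : LipschitzWith K φ)
    (k n : ℕ) (hn : n < N k) :
    |(∫ x, φ x ∂(fdScheme v μbar (h k) (Δt k) (n + 1))) -
      ∫ x, φ (x + Δt k • v (fdScheme v μbar (h k) (Δt k) n) x)
        ∂(fdScheme v μbar (h k) (Δt k) n)| ≤
      (2 + L * Δt k) * K * Real.sqrt d * h k := by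
  obtain ⟨hV, hL, hbdd, hlip, -⟩ := hA
  have hh : 0 < h k := hhpos k
  have hΔt : 0 < Δt k := hΔtpos k
  set lam := fdScheme v μbar (h k) (Δt k) n with hlam
  have hPlam : P1 lam := P1_fdScheme hbdd hμbar hh hΔt n
  haveI := hPlam.1
  -- the discrete velocity and flows
  set w : Euc d → Euc d := fun x => Δt k • vhat v (h k) lam x with hw
  have hwm : Measurable w := (measurable_vhat v lam).const_smul (Δt k)
  have hwb : ∀ x, ‖w x‖ ≤ Δt k * V := by
    intro x
    rw [hw, norm_smul, Real.norm_eq_abs, abs_of_pos hΔt]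
    exact mul_le_mul_of_nonneg_left (hbdd _ hPlam _) hΔt.le
  -- continuity of v lam
  have hvlip : ∀ x y : Euc d, ‖v lam y - v lam x‖ ≤ L * ‖y - x‖ := by
    intro x y
    have := hlip lam lam hPlam hPlam x y
    rwa [W1_self, add_zero] at this
  have hvm : Measurable (v lam) := by
    have : LipschitzWith L.toNNReal (v lam) := by
      apply LipschitzWith.of_dist_le_mul
      intro x y
      rw [dist_eq_norm, dist_eq_norm, Real.coe_toNNReal L hL.le]
      exact hvlip y x
    exact this.continuous.measurable
  set w' : Euc d → Euc d := fun x => Δt k • v lam x with hw'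
  have hw'm : Measurable w' := hvm.const_smul (Δt k)
  have hw'b : ∀ x, ‖w' x‖ ≤ Δt k * V := by
    intro x
    rw [hw', norm_smul, Real.norm_eq_abs, abs_of_pos hΔt]
    exact mul_le_mul_of_nonneg_left (hbdd _ hPlam _) hΔt.le
  set ν := lam.map (fun x => x + w x) with hν
  have hPν : P1 ν := P1_map hPlam hwm hwb
  have hstep : fdScheme v μbar (h k) (Δt k) (n + 1) = discretize (h k) ν := rfl
  -- term 1 : discretization error
  have hT1 : |(∫ x, φ x ∂(discretize (h k) ν)) - ∫ x, φ x ∂ν| ≤ (K : ℝ) * Real.sqrt d * h k :=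
    abs_integral_discretize_sub_le hh hPν hφ
  -- term 2 : change of variables
  have hT2 : ∫ x, φ x ∂ν = ∫ x, φ (x + w x) ∂lam :=
    integral_map (measurable_id.add hwm).aemeasurable
      hφ.continuous.measurable.aestronglyMeasurable
  -- term 3 : velocity discretization error
  have hf1 : Integrable (fun x => φ (x + w x)) lam := integrable_comp_shift hPlam hφ hwm hwb
  have hf2 : Integrable (fun x => φ (x + w' x)) lam := integrable_comp_shift hPlam hφ hw'm hw'b
  set r := Real.sqrt d * h k / 2 with hr
  have hptw : ∀ x, |φ (x + w x) - φ (x + w' x)| ≤ (K : ℝ) * (Δt k * (L * r)) := by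
    intro x
    have hd1 := hφ.dist_le_mul (x + w x) (x + w' x)
    rw [Real.dist_eq, dist_eq_norm] at hd1
    have hnorm : ‖(x + w x) - (x + w' x)‖ = Δt k * ‖vhat v (h k) lam x - v lam x‖ := by
      rw [show (x + w x) - (x + w' x) = Δt k • (vhat v (h k) lam x - v lam x) by
        rw [hw, hw', smul_sub]; abel]
      rw [norm_smul, Real.norm_eq_abs, abs_of_pos hΔt]
    have hvd : ‖vhat v (h k) lam x - v lam x‖ ≤ L * r := by
      have h1 := hlip lam lam hPlam hPlam x (cellCenter (h k) (cellIdx (h k) x))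
      rw [W1_self, add_zero] at h1
      refine (h1.trans ?_)
      rw [norm_sub_rev]
      exact mul_le_mul_of_nonneg_left (norm_sub_center_le hh x) hL.le
    calc |φ (x + w x) - φ (x + w' x)| ≤ (K : ℝ) * ‖(x + w x) - (x + w' x)‖ := hd1
      _ = (K : ℝ) * (Δt k * ‖vhat v (h k) lam x - v lam x‖) := by rw [hnorm]
      _ ≤ (K : ℝ) * (Δt k * (L * r)) := by
          refine mul_le_mul_of_nonneg_left (mul_le_mul_of_nonneg_left hvd hΔt.le) K.2
  have hT3 : |(∫ x, φ (x + w x) ∂lam) - ∫ x, φ (x + w' x) ∂lam|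
      ≤ (K : ℝ) * (Δt k * (L * r)) := by
    rw [← integral_sub hf1 hf2]
    calc |∫ x, φ (x + w x) - φ (x + w' x) ∂lam|
        ≤ ∫ x, |φ (x + w x) - φ (x + w' x)| ∂lam := by
          simpa [Real.norm_eq_abs] using
            norm_integral_le_integral_norm (fun x => φ (x + w x) - φ (x + w' x)) (μ := lam)
      _ ≤ ∫ _x, (K : ℝ) * (Δt k * (L * r)) ∂lam :=
          integral_mono (hf1.sub hf2).abs (integrable_const _) (fun x => hptw x)
      _ = (K : ℝ) * (Δt k * (L * r)) := by simp
  -- assemble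
  rw [hstep]
  have hKsd : (0:ℝ) ≤ (K : ℝ) * Real.sqrt d * h k := by positivity
  calc |(∫ x, φ x ∂(discretize (h k) ν)) - ∫ x, φ (x + w' x) ∂lam|
      = |((∫ x, φ x ∂(discretize (h k) ν)) - ∫ x, φ x ∂ν)
          + ((∫ x, φ (x + w x) ∂lam) - ∫ x, φ (x + w' x) ∂lam)| := by rw [hT2]; ring_nf
    _ ≤ |(∫ x, φ x ∂(discretize (h k) ν)) - ∫ x, φ x ∂ν|
          + |(∫ x, φ (x + w x) ∂lam) - ∫ x, φ (x + w' x) ∂lam| := abs_add_le _ _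
    _ ≤ (K : ℝ) * Real.sqrt d * h k + (K : ℝ) * (Δt k * (L * r)) := add_le_add hT1 hT3
    _ ≤ (2 + L * Δt k) * K * Real.sqrt d * h k := by
        rw [hr]
        nlinarith [mul_nonneg (mul_nonneg hL.le hΔt.le) hKsd, hKsd]


end
end

section
/- Anisotropic interactions in dimension 2: let v_d : ℝ² → ℝ² be Lipschitz with |v_d(x)| = 1 for all x, let R > 0, N ∈ ℕ, U_0 ⊆ B_R(0) measurable, F : ℝ² → ℝ² Lipschitz on B_R(0), and χ : ℝ² → [0,1] Lipschitz with χ(z) = 0 for z ∉ U_0. For x ∈ ℝ² let R_x be the rotation matrix determined by v_d(x) (cos θ_x = v_d(x)·e₁, sin θ_x the third component of (v_d(x),0)×(e₁,0)), and ξ_x(z) = R_x z + x. Define v[μ](x) = v_d(x) + N ∫_{ℝ²} F(R_x z) χ(z) d(ξ_x^{−1}#μ)(z), equivalently v[μ](x) = v_d(x) + N ∫_{ℝ²} F(y−x) χ(ξ_x^{−1}(y)) dμ(y). Then v satisfies Assumption A: (i) |v[μ](x)| ≤ 1 + N sup_{|z|≤R}|F(z)|; (ii) there is L > 0 with |v[ν](y)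 − v[μ](x)| ≤ L(|y−x| + W₁(μ,ν)) for all x,y ∈ ℝ² and μ,ν ∈ P₁(ℝ²); (iii) v[αμ+(1−α)ν] = αv[μ]+(1−α)v[ν] for α ∈ [0,1]. -/
/-!
Writing `ξ_x⁻¹ y = A_x (y - x)`, the map `A_x = R_x⁻¹` is multiplication by the unit complex
number `v_d(x)`, so every `A_x` is a linear isometry and `x ↦ A_x` is `Kd`-Lipschitz. Hence the
kernel `g(x, y) = χ(A_x (y - x)) F(y - x)` vanishes unless `|y - x| ≤ R`, is bounded by
`sup_{B_R} |F|`, and is Lipschitz in `y` and in `x`: where `F` is not controlled the cutoff `χ`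
vanishes. Then (i) is the bound on `g`, (iii) is linearity of `μ ↦ ∫ g(x, ·) dμ`, and (ii) reduces
to `‖∫ g dν - ∫ g dμ‖ ≤ Lip(g) W₁(μ, ν)`, which follows by testing `W₁` against `f ∘ g` for a
norming functional `f`.
-/

open MeasureTheory Metric Filter

noncomputable section

namespace P1

variable {d : ℕ} {μ ν : Measure (Euc d)}

theorem integrable_of_lipschitzWith {G : Type*} [NormedAddCommGroup G] (hμ : P1 μ) {K : NNReal}
    {g : Euc d → G} (hg : LipschitzWith K g) : Integrable g μ := by
  have := hμ.1
  refine ((integrable_const ‖g 0‖).add (hμ.2.const_mul K)).mono'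
    hg.continuous.aestronglyMeasurable (Eventually.of_forall fun z => ?_)
  have h := hg.dist_le_mul z 0
  rw [dist_eq_norm, dist_zero_right] at h
  show ‖g z‖ ≤ ‖g 0‖ + K * ‖z‖
  linarith [norm_le_insert' (g z) (g 0)]

theorem bddAbove_W1_range (hμ : P1 μ) (hν : P1 ν) :
    BddAbove (Set.range fun φ : {φ : Euc d → ℝ // LipschitzWith 1 φ} =>
      ∫ x, φ.1 x ∂ν - ∫ x, φ.1 x ∂μ) := by
  have := hμ.1
  have := hν.1
  refine ⟨(∫ x, ‖x‖ ∂ν) + ∫ x, ‖x‖ ∂μ, ?_⟩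
  rintro _ ⟨⟨φ, hφ⟩, rfl⟩
  have hdev : ∀ x, |φ x - φ 0| ≤ ‖x‖ := fun x => by
    simpa [Real.dist_eq] using hφ.dist_le_mul x 0
  have hdev_int : ∀ {m : Measure (Euc d)}, P1 m → Integrable (fun x => φ x - φ 0) m :=
    fun hm => have := hm.1; (hm.integrable_of_lipschitzWith hφ).sub (integrable_const _)
  have hν_le : ∫ x, (φ x - φ 0) ∂ν ≤ ∫ x, ‖x‖ ∂ν :=
    integral_mono (hdev_int hν) hν.2 fun x => (le_abs_self _).trans (hdev x)
  have hμ_ge : ∫ x, -‖x‖ ∂μ ≤ ∫ x, (φ x - φ 0) ∂μ :=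
    integral_mono hμ.2.neg (hdev_int hμ) fun x => neg_le_of_abs_le (hdev x)
  rw [integral_sub (hν.integrable_of_lipschitzWith hφ) (integrable_const _)] at hν_le
  rw [integral_sub (hμ.integrable_of_lipschitzWith hφ) (integrable_const _), integral_neg]
    at hμ_ge
  simp only [integral_const, probReal_univ, one_smul] at hν_le hμ_ge
  linarith

theorem integral_sub_integral_le_W1 (hμ : P1 μ) (hν : P1 ν) {φ : Euc d → ℝ}
    (hφ : LipschitzWith 1 φ) : ∫ x, φ x ∂ν - ∫ x, φ x ∂μ ≤ W1 μ ν :=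
  le_ciSup (bddAbove_W1_range hμ hν) (⟨φ, hφ⟩ : {φ : Euc d → ℝ // LipschitzWith 1 φ})

theorem W1_nonneg (hμ : P1 μ) (hν : P1 ν) : 0 ≤ W1 μ ν := by
  simpa using integral_sub_integral_le_W1 hμ hν ((LipschitzWith.const (0 : ℝ)).weaken zero_le_one)

theorem integral_sub_integral_le_mul_W1 (hμ : P1 μ) (hν : P1 ν) {K : NNReal} {φ : Euc d → ℝ}
    (hφ : LipschitzWith K φ) : ∫ x, φ x ∂ν - ∫ x, φ x ∂μ ≤ K * W1 μ ν := by
  rcases eq_or_ne K 0 with rfl | hK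
  · have := hμ.1
    have := hν.1
    have hconst : φ = fun _ => φ 0 :=
      funext fun x => by simpa using hφ.dist_le_mul x 0
    rw [hconst]
    simp
  · have hK' : (0 : ℝ) < K := by positivity
    have hscaled : LipschitzWith 1 fun x => (K : ℝ)⁻¹ • φ x := by
      simpa [hK, Function.comp_def] using (lipschitzWith_smul (K : ℝ)⁻¹).comp hφ
    have h := integral_sub_integral_le_W1 hμ hν hscaled
    rw [integral_smul, integral_smul, ← smul_sub, smul_eq_mul, inv_mul_le_iff₀ hK'] at h
    exact h

theorem norm_integral_sub_integral_le_mul_W1 {G : Type*} [NormedAddCommGroup G]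
    [NormedSpace ℝ G] [CompleteSpace G] (hμ : P1 μ) (hν : P1 ν) {K : NNReal} {g : Euc d → G}
    (hg : LipschitzWith K g) : ‖∫ x, g x ∂ν - ∫ x, g x ∂μ‖ ≤ K * W1 μ ν := by
  obtain ⟨f, hf_norm, hf_eq⟩ := exists_dual_vector'' ℝ (∫ x, g x ∂ν - ∫ x, g x ∂μ)
  have hfg : LipschitzWith K (fun x => f (g x)) := by
    simpa [Function.comp_def] using (f.lipschitz.weaken (show ‖f‖₊ ≤ 1 from hf_norm)).comp hg
  calc ‖∫ x, g x ∂ν - ∫ x, g x ∂μ‖ = ∫ x, f (g x) ∂ν - ∫ x, f (g x) ∂μ := by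
        rw [f.integral_comp_comm (hν.integrable_of_lipschitzWith hg),
          f.integral_comp_comm (hμ.integrable_of_lipschitzWith hg), ← map_sub, hf_eq]
        rfl
    _ ≤ K * W1 μ ν := integral_sub_integral_le_mul_W1 hμ hν hfg

end P1

theorem Euc.norm_sq_two (u : Euc 2) : ‖u‖ ^ 2 = u 0 ^ 2 + u 1 ^ 2 := by
  simp [EuclideanSpace.norm_sq_eq, Fin.sum_univ_two]

/-- Multiplication by `u 0 + u 1 * I` on `ℂ ≅ ℝ²`. -/
def cmulMatrix (u : Euc 2) : Matrix (Fin 2) (Fin 2) ℝ :=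
  !![u 0, -u 1; u 1, u 0]

theorem norm_toEuclideanCLM_cmulMatrix (u w : Euc 2) :
    ‖Matrix.toEuclideanCLM (𝕜 := ℝ) (cmulMatrix u) w‖ = ‖u‖ * ‖w‖ := by
  rw [← sq_eq_sq₀ (norm_nonneg _) (by positivity), mul_pow, Euc.norm_sq_two, Euc.norm_sq_two,
    Euc.norm_sq_two]
  simp [cmulMatrix, Matrix.mulVec, dotProduct, Fin.sum_univ_two]
  ring

theorem cmulMatrix_sub (u u' : Euc 2) : cmulMatrix (u - u') = cmulMatrix u - cmulMatrix u' := by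
  ext i j
  fin_cases i <;> fin_cases j <;> simp [cmulMatrix, sub_eq_add_neg, add_comm]

theorem lipschitzWith_toEuclideanCLM_cmulMatrix :
    LipschitzWith 1 fun u : Euc 2 => Matrix.toEuclideanCLM (𝕜 := ℝ) (cmulMatrix u) := by
  refine LipschitzWith.of_dist_le_mul fun u u' => ?_
  rw [dist_eq_norm, dist_eq_norm, NNReal.coe_one, one_mul, ← map_sub, ← cmulMatrix_sub]
  exact ContinuousLinearMap.opNorm_le_bound _ (norm_nonneg _)
    fun w => (norm_toEuclideanCLM_cmulMatrix _ w).le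

theorem inv_rotationMatrix {u : Euc 2} (hu : ‖u‖ = 1) {c s : ℝ}
    (hc : c = inner ℝ u (EuclideanSpace.single (0 : Fin 2) (1 : ℝ)))
    (hs : s = (crossProduct ![u 0, u 1, 0]) ![1, 0, 0] 2) :
    (!![c, -s; s, c])⁻¹ = cmulMatrix u := by
  have h : u 0 ^ 2 + u 1 ^ 2 = 1 := by rw [← Euc.norm_sq_two, hu, one_pow]
  rw [hc, hs]
  refine Matrix.inv_eq_left_inv ?_
  ext i j
  fin_cases i <;> fin_cases j <;>
    simp [cmulMatrix, Matrix.mul_apply, Fin.sum_univ_two, EuclideanSpace.inner_single_right,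
      crossProduct] <;>
    linarith

theorem norm_smul_sub_smul_le {X G : Type*} [PseudoMetricSpace X] [NormedAddCommGroup G]
    [NormedSpace ℝ G] {S : Set X} {F : X → G} {LF : NNReal} {M : ℝ}
    (hF : LipschitzOnWith LF F S) (hFM : ∀ p ∈ S, ‖F p‖ ≤ M) {a a' : ℝ} {p p' : X}
    (ha' : |a'| ≤ 1) (hp : a ≠ 0 → p ∈ S) (hp' : a' ≠ 0 → p' ∈ S) :
    ‖a • F p - a' • F p'‖ ≤ |a - a'| * M + LF * dist p p' := by
  have hLF : 0 ≤ (LF : ℝ) * dist p p' := by positivity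
  by_cases ha'0 : a' = 0
  · subst ha'0
    by_cases ha0 : a = 0
    · simp [ha0, hLF]
    · rw [zero_smul, sub_zero, sub_zero, norm_smul, Real.norm_eq_abs]
      nlinarith [mul_le_mul_of_nonneg_left (hFM p (hp ha0)) (abs_nonneg a)]
  by_cases ha0 : a = 0
  · rw [ha0, zero_smul, zero_sub, norm_neg, norm_smul, Real.norm_eq_abs, zero_sub, abs_neg]
    nlinarith [mul_le_mul_of_nonneg_left (hFM p' (hp' ha'0)) (abs_nonneg a')]
  have hpS := hp ha0
  have hp'S := hp' ha'0
  calc ‖a • F p - a' • F p'‖ = ‖(a - a') • F p + a' • (F p - F p')‖ := by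
        rw [sub_smul, smul_sub]; abel_nf
    _ ≤ |a - a'| * ‖F p‖ + |a'| * ‖F p - F p'‖ := by
        simpa only [norm_smul, Real.norm_eq_abs] using
          norm_add_le ((a - a') • F p) (a' • (F p - F p'))
    _ ≤ |a - a'| * M + 1 * (LF * dist p p') := by
        gcongr
        · exact hFM p hpS
        · rw [← dist_eq_norm]
          exact hF.dist_le_mul p hpS p' hp'S
    _ = |a - a'| * M + LF * dist p p' := by rw [one_mul]

section AnisotropicKernel

variable {E G : Type*} [NormedAddCommGroup E] [NormedSpace ℝ E] [NormedAddCommGroup G]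
  [NormedSpace ℝ G]

/-- The integrand `y ↦ χ(ξ_x⁻¹ y) F(y - x)` of the interaction, with `ξ_x⁻¹ y = A x (y - x)`. -/
def anisotropicKernel (A : E → E →L[ℝ] E) (χ : E → ℝ) (F : E → G) (x y : E) : G :=
  χ (A x (y - x)) • F (y - x)

variable {A : E → E →L[ℝ] E} {χ : E → ℝ} {F : E → G} {R M Lχ LF KA : NNReal}

theorem sub_mem_closedBall_of_ne_zero (hA : ∀ x w, ‖A x w‖ = ‖w‖)
    (hχsupp : Function.support χ ⊆ closedBall 0 R) {x y : E} (h : χ (A x (y - x)) ≠ 0) :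
    y - x ∈ closedBall (0 : E) R := by
  have hmem := hχsupp h
  rwa [mem_closedBall_zero_iff, hA, ← mem_closedBall_zero_iff] at hmem

theorem norm_anisotropicKernel_le (hA : ∀ x w, ‖A x w‖ = ‖w‖) (hχ1 : ∀ z, |χ z| ≤ 1)
    (hχsupp : Function.support χ ⊆ closedBall 0 R) (hFM : ∀ p ∈ closedBall (0 : E) R, ‖F p‖ ≤ M)
    (x y : E) : ‖anisotropicKernel A χ F x y‖ ≤ M := by
  by_cases h : χ (A x (y - x)) = 0
  · rw [anisotropicKernel, h, zero_smul, norm_zero]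
    exact M.coe_nonneg
  · rw [anisotropicKernel, norm_smul, Real.norm_eq_abs, ← one_mul (M : ℝ)]
    exact mul_le_mul (hχ1 _) (hFM _ (sub_mem_closedBall_of_ne_zero hA hχsupp h))
      (norm_nonneg _) zero_le_one

theorem anisotropicKernel_lipschitzWith_right (hA : ∀ x w, ‖A x w‖ = ‖w‖)
    (hχ1 : ∀ z, |χ z| ≤ 1) (hχsupp : Function.support χ ⊆ closedBall 0 R)
    (hχ : LipschitzWith Lχ χ) (hF : LipschitzOnWith LF F (closedBall 0 R))
    (hFM : ∀ p ∈ closedBall (0 : E) R, ‖F p‖ ≤ M) (x : E) :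
    LipschitzWith (Lχ * M + LF) (anisotropicKernel A χ F x) := by
  refine LipschitzWith.of_dist_le_mul fun y y' => ?_
  have hχdiff : |χ (A x (y - x)) - χ (A x (y' - x))| ≤ Lχ * ‖y - y'‖ := by
    have h := hχ.dist_le_mul (A x (y - x)) (A x (y' - x))
    rwa [Real.dist_eq, dist_eq_norm, ← map_sub, hA, sub_sub_sub_cancel_right] at h
  calc dist (anisotropicKernel A χ F x y) (anisotropicKernel A χ F x y')
      ≤ |χ (A x (y - x)) - χ (A x (y' - x))| * M + LF * dist (y - x) (y' - x) := by
        rw [dist_eq_norm]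
        exact norm_smul_sub_smul_le hF hFM (hχ1 _) (sub_mem_closedBall_of_ne_zero hA hχsupp)
          (sub_mem_closedBall_of_ne_zero hA hχsupp)
    _ ≤ Lχ * ‖y - y'‖ * M + LF * ‖y - y'‖ := by
        rw [dist_sub_right, dist_eq_norm]
        gcongr
    _ = ↑(Lχ * M + LF) * dist y y' := by
        push_cast
        rw [dist_eq_norm]
        ring

theorem norm_apply_sub_sub_apply_sub_le (hA : ∀ x w, ‖A x w‖ = ‖w‖) (hAlip : LipschitzWith KA A)
    (x x' y : E) : ‖A x (y - x) - A x' (y - x')‖ ≤ (KA * ‖y - x‖ + 1) * ‖x - x'‖ := by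
  have hsplit : A x (y - x) - A x' (y - x') = (A x - A x') (y - x) + A x' (x' - x) := by
    simp only [FunLike.coe_sub, Pi.sub_apply, map_sub]
    abel
  have hop : ‖A x - A x'‖ ≤ KA * ‖x - x'‖ := by
    simpa only [dist_eq_norm] using hAlip.dist_le_mul x x'
  calc ‖A x (y - x) - A x' (y - x')‖ ≤ ‖A x - A x'‖ * ‖y - x‖ + ‖x' - x‖ := by
        rw [hsplit, ← hA x' (x' - x)]
        exact (norm_add_le _ _).trans (by gcongr; exact (A x - A x').le_opNorm _)
    _ ≤ KA * ‖x - x'‖ * ‖y - x‖ + ‖x - x'‖ := by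
        rw [norm_sub_rev x' x]
        gcongr
    _ = (KA * ‖y - x‖ + 1) * ‖x - x'‖ := by ring

theorem abs_cutoff_sub_le (hA : ∀ x w, ‖A x w‖ = ‖w‖) (hAlip : LipschitzWith KA A)
    (hχsupp : Function.support χ ⊆ closedBall 0 R) (hχ : LipschitzWith Lχ χ) (x x' y : E) :
    |χ (A x (y - x)) - χ (A x' (y - x'))| ≤ Lχ * (KA * R + 1) * ‖x - x'‖ := by
  -- The estimate on `A` needs `‖y - x₁‖ ≤ R`, which holds at a base point with nonzero cutoff.
  have hone_sided : ∀ x₁ x₂, χ (A x₁ (y - x₁)) ≠ 0 →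
      |χ (A x₁ (y - x₁)) - χ (A x₂ (y - x₂))| ≤ Lχ * (KA * R + 1) * ‖x₁ - x₂‖ := by
    intro x₁ x₂ hx₁
    have hyx₁ : ‖y - x₁‖ ≤ R := by simpa using sub_mem_closedBall_of_ne_zero hA hχsupp hx₁
    calc |χ (A x₁ (y - x₁)) - χ (A x₂ (y - x₂))|
        ≤ Lχ * ‖A x₁ (y - x₁) - A x₂ (y - x₂)‖ := by
          simpa [Real.dist_eq, dist_eq_norm] using
            hχ.dist_le_mul (A x₁ (y - x₁)) (A x₂ (y - x₂))
      _ ≤ Lχ * ((KA * ‖y - x₁‖ + 1) * ‖x₁ - x₂‖) := by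
          gcongr
          exact norm_apply_sub_sub_apply_sub_le hA hAlip x₁ x₂ y
      _ ≤ Lχ * (KA * R + 1) * ‖x₁ - x₂‖ := by
          rw [← mul_assoc]
          gcongr
  by_cases hx : χ (A x (y - x)) = 0
  · by_cases hx' : χ (A x' (y - x')) = 0
    · rw [hx, hx', sub_zero, abs_zero]
      positivity
    · rw [abs_sub_comm, norm_sub_rev]
      exact hone_sided x' x hx'
  · exact hone_sided x x' hx

theorem anisotropicKernel_lipschitzWith_left (hA : ∀ x w, ‖A x w‖ = ‖w‖)
    (hAlip : LipschitzWith KA A) (hχ1 : ∀ z, |χ z| ≤ 1)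
    (hχsupp : Function.support χ ⊆ closedBall 0 R) (hχ : LipschitzWith Lχ χ)
    (hF : LipschitzOnWith LF F (closedBall 0 R)) (hFM : ∀ p ∈ closedBall (0 : E) R, ‖F p‖ ≤ M)
    (y : E) : LipschitzWith (Lχ * (KA * R + 1) * M + LF) (anisotropicKernel A χ F · y) := by
  refine LipschitzWith.of_dist_le_mul fun x x' => ?_
  calc dist (anisotropicKernel A χ F x y) (anisotropicKernel A χ F x' y)
      ≤ |χ (A x (y - x)) - χ (A x' (y - x'))| * M + LF * dist (y - x) (y - x') := by
        rw [dist_eq_norm]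
        exact norm_smul_sub_smul_le hF hFM (hχ1 _) (sub_mem_closedBall_of_ne_zero hA hχsupp)
          (sub_mem_closedBall_of_ne_zero hA hχsupp)
    _ ≤ Lχ * (KA * R + 1) * ‖x - x'‖ * M + LF * ‖x - x'‖ := by
        rw [dist_sub_left, dist_eq_norm]
        gcongr
        exact abs_cutoff_sub_le hA hAlip hχsupp hχ x x' y
    _ = ↑(Lχ * (KA * R + 1) * M + LF) * dist x x' := by
        push_cast
        rw [dist_eq_norm]
        ring

end AnisotropicKernel

theorem le_iSup_of_isCompact {X : Type*} [TopologicalSpace X] {s : Set X} {f : X → ℝ}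
    (hs : IsCompact s) (hf : ContinuousOn f s) {z : X} (hz : z ∈ s) :
    f z ≤ ⨆ z : s, f z :=
  le_ciSup (f := fun z : s => f z) (by simpa only [Set.image_eq_range] using hs.bddAbove_image hf)
    ⟨z, hz⟩

theorem integral_ofReal_smul_add_ofReal_smul {α G : Type*} [MeasurableSpace α]
    [NormedAddCommGroup G] [NormedSpace ℝ G] {μ ν : Measure α} {f : α → G}
    (hμ : Integrable f μ) (hν : Integrable f ν) {a b : ℝ} (ha : 0 ≤ a) (hb : 0 ≤ b) :
    ∫ x, f x ∂(ENNReal.ofReal a • μ + ENNReal.ofReal b • ν)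
      = a • ∫ x, f x ∂μ + b • ∫ x, f x ∂ν := by
  rw [integral_add_measure (hμ.smul_measure ENNReal.ofReal_ne_top)
      (hν.smul_measure ENNReal.ofReal_ne_top), integral_smul_measure, integral_smul_measure,
    ENNReal.toReal_ofReal ha, ENNReal.toReal_ofReal hb]

section Velocity

variable {d : ℕ} {G : Type*} [NormedAddCommGroup G] [NormedSpace ℝ G]

def velocity (vd : Euc d → G) (N : ℝ) (g : Euc d → Euc d → G) (μ : Measure (Euc d))
    (x : Euc d) : G :=
  vd x + N • ∫ y, g x y ∂μ

variable {vd : Euc d → G} {N : ℝ} {g : Euc d → Euc d → G} {μ ν : Measure (Euc d)}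

theorem norm_velocity_le [IsProbabilityMeasure μ] {M : ℝ} (hg : ∀ x y, ‖g x y‖ ≤ M) (x : Euc d) :
    ‖velocity vd N g μ x‖ ≤ ‖vd x‖ + |N| * M := by
  have hint : ‖∫ y, g x y ∂μ‖ ≤ M := by
    simpa using norm_integral_le_of_norm_le_const (μ := μ) (Eventually.of_forall (hg x))
  calc ‖velocity vd N g μ x‖ ≤ ‖vd x‖ + |N| * ‖∫ y, g x y ∂μ‖ := by
        rw [velocity, ← Real.norm_eq_abs, ← norm_smul]
        exact norm_add_le _ _
    _ ≤ ‖vd x‖ + |N| * M := by gcongr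

theorem norm_velocity_sub_le [CompleteSpace G] (hμ : P1 μ) (hν : P1 ν) {Kd K₁ K₂ : NNReal}
    (hvd : LipschitzWith Kd vd) (hg₁ : ∀ x, LipschitzWith K₁ (g x))
    (hg₂ : ∀ z, LipschitzWith K₂ (g · z)) (x y : Euc d) :
    ‖velocity vd N g ν y - velocity vd N g μ x‖
      ≤ (Kd + |N| * (K₁ + K₂)) * (‖y - x‖ + W1 μ ν) := by
  have := hμ.1
  have hμ_moved : ‖∫ z, g y z ∂μ - ∫ z, g x z ∂μ‖ ≤ K₂ * ‖y - x‖ := by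
    rw [← integral_sub (hμ.integrable_of_lipschitzWith (hg₁ y))
      (hμ.integrable_of_lipschitzWith (hg₁ x))]
    have hpointwise : ∀ z, ‖g y z - g x z‖ ≤ K₂ * ‖y - x‖ := fun z => by
      simpa only [dist_eq_norm] using (hg₂ z).dist_le_mul y x
    simpa using norm_integral_le_of_norm_le_const (μ := μ) (Eventually.of_forall hpointwise)
  have hmeasure_moved := hμ.norm_integral_sub_integral_le_mul_W1 hν (hg₁ y)
  have hvd_moved : ‖vd y - vd x‖ ≤ Kd * ‖y - x‖ := by
    simpa only [dist_eq_norm] using hvd.dist_le_mul y x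
  have hW := hμ.W1_nonneg hν
  calc ‖velocity vd N g ν y - velocity vd N g μ x‖
      = ‖(vd y - vd x) + N • ((∫ z, g y z ∂ν - ∫ z, g y z ∂μ)
          + (∫ z, g y z ∂μ - ∫ z, g x z ∂μ))‖ := by
        rw [velocity, velocity]
        congr 1
        module
    _ ≤ ‖vd y - vd x‖ + |N| * (‖∫ z, g y z ∂ν - ∫ z, g y z ∂μ‖
          + ‖∫ z, g y z ∂μ - ∫ z, g x z ∂μ‖) := by
        refine (norm_add_le _ _).trans ?_
        rw [norm_smul, Real.norm_eq_abs]
        gcongr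
        exact norm_add_le _ _
    _ ≤ Kd * ‖y - x‖ + |N| * (K₁ * W1 μ ν + K₂ * ‖y - x‖) := by gcongr
    _ ≤ (Kd + |N| * (K₁ + K₂)) * (‖y - x‖ + W1 μ ν) := by
        nlinarith [mul_nonneg Kd.coe_nonneg hW, mul_nonneg (abs_nonneg N)
          (mul_nonneg K₁.coe_nonneg (norm_nonneg (y - x))),
          mul_nonneg (abs_nonneg N) (mul_nonneg K₂.coe_nonneg hW)]

theorem velocity_ofReal_smul_add_ofReal_smul (hμ : P1 μ) (hν : P1 ν) {K : NNReal}
    (hg : ∀ x, LipschitzWith K (g x)) {α : ℝ} (hα₀ : 0 ≤ α) (hα₁ : α ≤ 1) (x : Euc d) :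
    velocity vd N g (ENNReal.ofReal α • μ + ENNReal.ofReal (1 - α) • ν) x
      = α • velocity vd N g μ x + (1 - α) • velocity vd N g ν x := by
  rw [velocity, integral_ofReal_smul_add_ofReal_smul (hμ.integrable_of_lipschitzWith (hg x))
    (hν.integrable_of_lipschitzWith (hg x)) hα₀ (by linarith), velocity, velocity]
  module

end Velocity

theorem anisotropic_velocity_satisfies_assumptionA_general
    (vd : Euc 2 → Euc 2) (Kd : NNReal) (hvdlip : LipschitzWith Kd vd)
    (hunit : ∀ x, ‖vd x‖ = 1)
    (R : ℝ) (hR : 0 < R) (N : ℕ)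
    (U₀ : Set (Euc 2)) (hU₀sub : U₀ ⊆ Metric.ball 0 R)
    (F : Euc 2 → Euc 2) (LF : NNReal)
    (hF : LipschitzOnWith LF F (Metric.closedBall 0 R))
    (χ : Euc 2 → ℝ) (Lχ : NNReal) (hχlip : LipschitzWith Lχ χ)
    (hχrange : ∀ z, χ z ∈ Set.Icc (0:ℝ) 1)
    (hχ0 : ∀ z ∉ U₀, χ z = 0)
    (Fmax : ℝ) (hFmax : Fmax = ⨆ z : Metric.closedBall (0:Euc 2) R, ‖F z.1‖)
    (c s : Euc 2 → ℝ)
    (hc : ∀ x, c x = (inner ℝ (vd x) (EuclideanSpace.single (0 : Fin 2) (1:ℝ)) : ℝ))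
    (hs : ∀ x, s x = (crossProduct ![vd x 0, vd x 1, 0]) ![1, 0, 0] 2)
    (Rm : Euc 2 → Matrix (Fin 2) (Fin 2) ℝ)
    (hRm : ∀ x, Rm x = !![c x, -(s x); s x, c x])
    (ξinv : Euc 2 → Euc 2 → Euc 2)
    (hξinv : ∀ x y, ξinv x y =
      (EuclideanSpace.equiv (Fin 2) ℝ).symm ((Rm x)⁻¹.mulVec (fun l => (y - x) l)))
    (v : Measure (Euc 2) → Euc 2 → Euc 2)
    (hv : ∀ μ x, v μ x = vd x + (N : ℝ) • ∫ y, χ (ξinv x y) • F (y - x) ∂μ) :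
    (∀ μ, P1 μ → ∀ x, ‖v μ x‖ ≤ 1 + N * Fmax) ∧
    (∃ L : ℝ, 0 < L ∧ ∀ μ ν, P1 μ → P1 ν → ∀ x y,
      ‖v ν y - v μ x‖ ≤ L * (‖y - x‖ + W1 μ ν)) ∧
    (∀ μ ν, P1 μ → P1 ν → ∀ α : ℝ, 0 ≤ α → α ≤ 1 → ∀ x,
      v (ENNReal.ofReal α • μ + ENNReal.ofReal (1 - α) • ν) x
        = α • v μ x + (1 - α) • v ν x) := by
  set A : Euc 2 → Euc 2 →L[ℝ] Euc 2 := fun x => Matrix.toEuclideanCLM (𝕜 := ℝ) (cmulMatrix (vd x))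
  have hA : ∀ x w, ‖A x w‖ = ‖w‖ := fun x w => by
    rw [norm_toEuclideanCLM_cmulMatrix, hunit, one_mul]
  have hAlip : LipschitzWith (1 * Kd) A := lipschitzWith_toEuclideanCLM_cmulMatrix.comp hvdlip
  have hv' : v = velocity vd N (anisotropicKernel A χ F) := by
    have hRm_inv : ∀ x, (Rm x)⁻¹ = cmulMatrix (vd x) := fun x =>
      hRm x ▸ inv_rotationMatrix (hunit x) (hc x) (hs x)
    ext μ x : 2
    simp only [hv, hξinv, hRm_inv]
    rfl
  subst hv'
  set R' : NNReal := ⟨R, hR.le⟩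
  have hχ1 : ∀ z, |χ z| ≤ 1 := fun z => abs_le.2 ⟨by linarith [(hχrange z).1], (hχrange z).2⟩
  have hχsupp : Function.support χ ⊆ closedBall 0 R' := fun z hz =>
    ball_subset_closedBall (hU₀sub (by_contra fun hzU => hz (hχ0 z hzU)))
  set M : NNReal := ⟨Fmax, hFmax ▸ Real.iSup_nonneg fun _ => norm_nonneg _⟩
  have hFM : ∀ p ∈ closedBall (0 : Euc 2) R', ‖F p‖ ≤ M := fun p hp => by
    show ‖F p‖ ≤ Fmax
    rw [hFmax]
    exact le_iSup_of_isCompact (isCompact_closedBall 0 R) hF.continuousOn.norm hp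
  have hbound := norm_anisotropicKernel_le hA hχ1 hχsupp hFM
  obtain ⟨K₁, hlip₁⟩ : ∃ K, ∀ x, LipschitzWith K (anisotropicKernel A χ F x) :=
    ⟨_, anisotropicKernel_lipschitzWith_right hA hχ1 hχsupp hχlip hF hFM⟩
  obtain ⟨K₂, hlip₂⟩ : ∃ K, ∀ y, LipschitzWith K (anisotropicKernel A χ F · y) :=
    ⟨_, anisotropicKernel_lipschitzWith_left hA hAlip hχ1 hχsupp hχlip hF hFM⟩
  refine ⟨fun μ hμ x => ?_, ⟨Kd + N * (K₁ + K₂) + 1, by positivity, fun μ ν hμ hν x y => ?_⟩,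
    fun μ ν hμ hν α hα₀ hα₁ x => velocity_ofReal_smul_add_ofReal_smul hμ hν hlip₁ hα₀ hα₁ x⟩
  · have := hμ.1
    have h := norm_velocity_le (μ := μ) (N := N) (vd := vd) hbound x
    rwa [hunit, Nat.abs_cast] at h
  · refine (norm_velocity_sub_le hμ hν hvdlip hlip₁ hlip₂ x y).trans ?_
    rw [Nat.abs_cast]
    exact mul_le_mul_of_nonneg_right (le_add_of_nonneg_right zero_le_one)
      (add_nonneg (norm_nonneg _) (hμ.W1_nonneg hν))

/-- Proposition 3 of the paper: anisotropic interactions in `ℝ²`.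
Let `v_d : ℝ² → ℝ²` be Lipschitz with `|v_d(x)| = 1`, `R > 0`, `N ∈ ℕ`, `U₀ ⊆ B_R(0)`
measurable, `F` Lipschitz on the ball of radius `R`, and `χ : ℝ² → [0,1]` Lipschitz with
`χ = 0` outside `U₀`. With `R_x` the rotation determined by `v_d(x)` and
`ξ_x(z) = R_x z + x`, the velocity
`v[μ](x) = v_d(x) + N ∫ F(y−x) χ(ξ_x⁻¹(y)) dμ(y)` satisfies Assumption A:
(i) `|v[μ](x)| ≤ 1 + N sup_{|z|≤R}|F|`; (ii) combined Lipschitz continuity in `x` and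
`μ` (w.r.t. `W₁`); (iii) linearity w.r.t. the measure for convex combinations. -/
theorem anisotropic_velocity_satisfies_assumptionA
    (vd : Euc 2 → Euc 2) (Kd : NNReal) (hvdlip : LipschitzWith Kd vd)
    (hunit : ∀ x, ‖vd x‖ = 1)
    (R : ℝ) (hR : 0 < R) (N : ℕ)
    (U₀ : Set (Euc 2)) (hU₀sub : U₀ ⊆ Metric.ball 0 R) (hU₀meas : MeasurableSet U₀)
    (F : Euc 2 → Euc 2) (LF : NNReal)
    (hF : LipschitzOnWith LF F (Metric.closedBall 0 R))
    (χ : Euc 2 → ℝ) (Lχ : NNReal) (hχlip : LipschitzWith Lχ χ)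
    (hχrange : ∀ z, χ z ∈ Set.Icc (0:ℝ) 1)
    (hχ0 : ∀ z ∉ U₀, χ z = 0)
    (Fmax : ℝ) (hFmax : Fmax = ⨆ z : Metric.closedBall (0:Euc 2) R, ‖F z.1‖)
    (c s : Euc 2 → ℝ)
    (hc : ∀ x, c x = (inner ℝ (vd x) (EuclideanSpace.single (0 : Fin 2) (1:ℝ)) : ℝ))
    (hs : ∀ x, s x = (crossProduct ![vd x 0, vd x 1, 0]) ![1, 0, 0] 2)
    (Rm : Euc 2 → Matrix (Fin 2) (Fin 2) ℝ)
    (hRm : ∀ x, Rm x = !![c x, -(s x); s x, c x])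
    (ξinv : Euc 2 → Euc 2 → Euc 2)
    (hξinv : ∀ x y, ξinv x y =
      (EuclideanSpace.equiv (Fin 2) ℝ).symm ((Rm x)⁻¹.mulVec (fun l => (y - x) l)))
    (v : Measure (Euc 2) → Euc 2 → Euc 2)
    (hv : ∀ μ x, v μ x = vd x + (N : ℝ) • ∫ y, χ (ξinv x y) • F (y - x) ∂μ) :
    (∀ μ, P1 μ → ∀ x, ‖v μ x‖ ≤ 1 + N * Fmax) ∧
    (∃ L : ℝ, 0 < L ∧ ∀ μ ν, P1 μ → P1 ν → ∀ x y,
      ‖v ν y - v μ x‖ ≤ L * (‖y - x‖ + W1 μ ν)) ∧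
    (∀ μ ν, P1 μ → P1 ν → ∀ α : ℝ, 0 ≤ α → α ≤ 1 → ∀ x,
      v (ENNReal.ofReal α • μ + ENNReal.ofReal (1 - α) • ν) x
        = α • v μ x + (1 - α) • v ν x) :=
  anisotropic_velocity_satisfies_assumptionA_general vd Kd hvdlip hunit R hR N U₀ hU₀sub F LF hF χ
    Lχ hχlip hχrange hχ0 Fmax hFmax c s hc hs Rm hRm ξinv hξinv v hv
end
end
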